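/- Let P, X, Y be real Banach spaces, K ⊆ Y a pointed closed convex cone, f : P × X → Y a K-convex and K-closed map, and C : P ⇉ X a closed convex set-valued map. Let (p̄, x̄) ∈ gph S with ȳ = f(p̄, x̄), let H : P ⇉ P × X be H(p) = {p} × C(p), and assume (i) ℝ⁺(rge H − dom f) is a closed linear subspace of P × X, and (ii) ℝ⁺(P − dom C) is a closed linear subspace of P. Then for every y* ∈ K*, D*(F + K)(p̄, ȳ)(y*) = ⋃_{(p*, x*) ∈ ∂⟨y*, f⟩(p̄, x̄)} {p* + q* : q* ∈ D*C(p̄, x̄)(x*)}. -/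

import Mathlib

open Set Pointwise Topology Filter

/-- The graph of a set-valued map. -/
def gph {α β : Type*} (H : α → Set β) : Set (α × β) := {q | q.2 ∈ H q.1}

/-- The domain of a set-valued map. -/
def dom {α β : Type*} (H : α → Set β) : Set α := {a | (H a).Nonempty}

/-- The coderivative (in the sense of convex analysis) of a set-valued map `H` at
`(a, b) ∈ gph H`:  `φ ∈ coderiv H a b ψ` iff `(φ, -ψ) ∈ N((a,b), gph H)`, that is,
`⟨φ, u - a⟩ - ⟨ψ, v - b⟩ ≤ 0` for all `(u, v) ∈ gph H`. -/
def coderiv {α β : Type*} [NormedAddCommGroup α] [NormedSpace ℝ α]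
    [NormedAddCommGroup β] [NormedSpace ℝ β]
    (H : α → Set β) (a : α) (b : β) (ψ : β →L[ℝ] ℝ) : Set (α →L[ℝ] ℝ) :=
  {φ | ∀ u : α, ∀ v ∈ H u, φ (u - a) - ψ (v - b) ≤ 0}

/-- The Fréchet coderivative of a set-valued map `H` at `(a, b) ∈ gph H`, with the sum
norm `‖(u,v)‖ = ‖u‖ + ‖v‖` on the product:  `φ ∈ fCoderiv H a b ψ` iff
`(φ, -ψ) ∈ N̂((a,b), gph H)`, the Fréchet normal cone, expressed by its standard
`ε`–`δ` characterization. -/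
def fCoderiv {α β : Type*} [NormedAddCommGroup α] [NormedSpace ℝ α]
    [NormedAddCommGroup β] [NormedSpace ℝ β]
    (H : α → Set β) (a : α) (b : β) (ψ : β →L[ℝ] ℝ) : Set (α →L[ℝ] ℝ) :=
  {φ | ∀ ε > (0:ℝ), ∃ δ > (0:ℝ), ∀ u : α, ∀ v ∈ H u, ‖u - a‖ + ‖v - b‖ < δ →
      φ (u - a) - ψ (v - b) ≤ ε * (‖u - a‖ + ‖v - b‖)}

/-- The subdifferential (in the sense of convex analysis) of `g : α → ℝ` at `a`. -/
def subdiff {α : Type*} [NormedAddCommGroup α] [NormedSpace ℝ α]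
    (g : α → ℝ) (a : α) : Set (α →L[ℝ] ℝ) :=
  {φ | ∀ u : α, φ (u - a) ≤ g u - g a}

/-!
Write `g = ⟨y*, f⟩`; it is convex because `f` is `K`-convex and `y* ∈ K*`. The inclusion `⊇` is
a direct computation. For `⊆`, membership of `φ` in `D*(F + K)(p̄, ȳ)(y*)` says exactly that
`(φ, 0)` is a subgradient of `g + δ_{gph C}` at `(p̄, x̄)`. Separating the (open) strict epigraph
of `g` from the graph of the affine minorant over `gph C` splits it into a subgradient of `g` plus
a normal to `gph C`.

Openness of the strict epigraph needs `g` continuous. By Baire's theorem one of the closed sets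
`cl {q | ∃ y, ‖y‖ ≤ n, (q, y) ∈ epi f}` has interior, and the dyadic-series argument of the open
mapping theorem, using that `epi f` is closed and convex and `Y` complete, removes the closure on
a smaller ball. So `g` is bounded above near a point, and a convex function bounded above near one
point is continuous.
-/

open Metric

theorem Convex.mem_of_hasSum_smul {E : Type*} [AddCommGroup E] [Module ℝ E] [TopologicalSpace E]
    [ContinuousSMul ℝ E] {M : Set E} (hM : Convex ℝ M) (hMc : IsClosed M) {w : ℕ → ℝ}
    {a : ℕ → E} {s : E} (hw0 : ∀ j, 0 ≤ w j) (hw1 : HasSum w 1) (ha : ∀ j, a j ∈ M)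
    (hs : HasSum (fun j => w j • a j) s) : s ∈ M := by
  have hW := hw1.tendsto_sum_nat
  have hlim : Tendsto (fun n => (∑ j ∈ Finset.range n, w j)⁻¹ • ∑ j ∈ Finset.range n, w j • a j)
      atTop (𝓝 s) := by
    simpa using (hW.inv₀ one_ne_zero).smul hs.tendsto_sum_nat
  refine hMc.mem_of_tendsto hlim ?_
  filter_upwards [hW.eventually (lt_mem_nhds zero_lt_one)] with n hn
  exact hM.centerMass_mem (fun j _ => hw0 j) hn (fun j _ => ha j)

theorem hasSum_half_pow_succ : HasSum (fun j : ℕ => (1 / 2 : ℝ) ^ (j + 1)) 1 := by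
  convert hasSum_geometric_two' 1 using 2 with j
  rw [pow_succ, div_pow, one_pow]; ring

theorem exists_dyadic_approx_of_ball_subset_closure {E : Type*} [NormedAddCommGroup E]
    [NormedSpace ℝ E] {S : Set E} {q₀ w : E} {ρ : ℝ} (hS : ball q₀ ρ ⊆ closure S)
    (hw : w ∈ ball q₀ (ρ / 2)) :
    ∃ x r : ℕ → E, ∀ n, x n ∈ S ∧ r n ∈ ball q₀ ρ ∧ dist (r n) (x n) < ρ / 2 ∧
      ∑ j ∈ Finset.range n, (1 / 2 : ℝ) ^ (j + 1) • x j =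
        w - (1 / 2 : ℝ) ^ (n + 1) • (r n + q₀) := by
  have hρ : 0 < ρ / 2 := pos_of_mem_ball hw
  have hpick : ∀ t, ∃ x, t ∈ ball q₀ ρ → x ∈ S ∧ dist t x < ρ / 2 := fun t => by
    by_cases ht : t ∈ ball q₀ ρ
    · obtain ⟨x, hxS, hx⟩ := Metric.mem_closure_iff.1 (hS ht) _ hρ
      exact ⟨x, fun _ => ⟨hxS, hx⟩⟩
    · exact ⟨q₀, fun h => absurd h ht⟩
  choose pick hpick using hpick
  let r : ℕ → E := fun n =>
    Nat.rec ((2 : ℝ) • w - q₀) (fun _ t => q₀ + (2 : ℝ) • (t - pick t)) n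
  have hr : ∀ n, r n ∈ ball q₀ ρ := by
    intro n
    induction n with
    | zero =>
      rw [mem_ball, dist_eq_norm] at hw ⊢
      calc ‖(2 : ℝ) • w - q₀ - q₀‖ = ‖(2 : ℝ) • (w - q₀)‖ := by congr 1; module
        _ = 2 * ‖w - q₀‖ := by rw [norm_smul, Real.norm_two]
        _ < ρ := by linarith
    | succ n ih =>
      have := (hpick _ ih).2
      rw [dist_eq_norm] at this
      rw [mem_ball, dist_eq_norm]
      show ‖q₀ + (2 : ℝ) • (r n - pick (r n)) - q₀‖ < ρ
      rw [add_sub_cancel_left, norm_smul, Real.norm_two]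
      linarith
  refine ⟨fun n => pick (r n), r, fun n => ⟨(hpick _ (hr n)).1, hr n, (hpick _ (hr n)).2, ?_⟩⟩
  induction n with
  | zero =>
    show 0 = w - (1 / 2 : ℝ) ^ (0 + 1) • ((2 : ℝ) • w - q₀ + q₀)
    module
  | succ n ih =>
    rw [Finset.sum_range_succ, ih]
    show _ = w - (1 / 2 : ℝ) ^ (n + 1 + 1) • (q₀ + (2 : ℝ) • (r n - pick (r n)) + q₀)
    rw [pow_succ]
    module

theorem exists_hasSum_half_pow_smul_of_ball_subset_closure {E : Type*} [NormedAddCommGroup E]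
    [NormedSpace ℝ E] {S : Set E} {q₀ w : E} {ρ : ℝ} (hS : ball q₀ ρ ⊆ closure S)
    (hw : w ∈ ball q₀ (ρ / 2)) :
    ∃ x : ℕ → E, (∀ j, x j ∈ S) ∧ HasSum (fun j => (1 / 2 : ℝ) ^ (j + 1) • x j) w := by
  obtain ⟨x, r, h⟩ := exists_dyadic_approx_of_ball_subset_closure hS hw
  have hbound : ∀ n, ‖r n + q₀‖ ≤ 2 * ‖q₀‖ + ρ ∧ ‖x n‖ ≤ ‖q₀‖ + ρ + ρ / 2 := by
    intro n
    obtain ⟨-, h1, h2, -⟩ := h n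
    rw [mem_ball, dist_eq_norm] at h1
    rw [dist_eq_norm] at h2
    constructor
    · calc ‖r n + q₀‖ = ‖(r n - q₀) + (2 : ℝ) • q₀‖ := by congr 1; module
        _ ≤ ‖r n - q₀‖ + 2 * ‖q₀‖ := by
          simpa [norm_smul] using norm_add_le (r n - q₀) ((2 : ℝ) • q₀)
        _ ≤ 2 * ‖q₀‖ + ρ := by linarith
    · calc ‖x n‖ = ‖q₀ + (r n - q₀) - (r n - x n)‖ := by congr 1; abel
        _ ≤ ‖q₀‖ + ‖r n - q₀‖ + ‖r n - x n‖ := norm_sub_le_of_le (norm_add_le _ _) le_rfl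
        _ ≤ ‖q₀‖ + ρ + ρ / 2 := by linarith
  have hgeom := hasSum_half_pow_succ.summable
  have hnorm : Summable fun j => ‖(1 / 2 : ℝ) ^ (j + 1) • x j‖ := by
    refine (hgeom.mul_right (‖q₀‖ + ρ + ρ / 2)).of_nonneg_of_le (fun _ => norm_nonneg _) fun j => ?_
    rw [norm_smul, Real.norm_of_nonneg (by positivity)]
    exact mul_le_mul_of_nonneg_left (hbound j).2 (by positivity)
  refine ⟨x, fun j => (h j).1, (hasSum_iff_tendsto_nat_of_summable_norm hnorm).2 ?_⟩
  simp only [fun n => (h n).2.2.2]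
  have htail : Tendsto (fun n => (1 / 2 : ℝ) ^ (n + 1) • (r n + q₀)) atTop (𝓝 0) := by
    have hlim := hgeom.tendsto_atTop_zero.mul_const (2 * ‖q₀‖ + ρ)
    rw [zero_mul] at hlim
    refine squeeze_zero_norm (fun n => ?_) hlim
    rw [norm_smul, Real.norm_of_nonneg (by positivity)]
    exact mul_le_mul_of_nonneg_left (hbound n).1 (by positivity)
  simpa using (tendsto_const_nhds (x := w)).sub htail

theorem ball_half_subset_image_fst {E Y : Type*} [NormedAddCommGroup E] [NormedSpace ℝ E]
    [NormedAddCommGroup Y] [NormedSpace ℝ Y] [CompleteSpace Y] {M : Set (E × Y)}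
    (hM : Convex ℝ M) (hMc : IsClosed M) {N : ℝ} (hMN : ∀ m ∈ M, ‖m.2‖ ≤ N) {q₀ : E} {ρ : ℝ}
    (hρ : ball q₀ ρ ⊆ closure (Prod.fst '' M)) : ball q₀ (ρ / 2) ⊆ Prod.fst '' M := by
  intro w hw
  obtain ⟨x, hx, hxw⟩ := exists_hasSum_half_pow_smul_of_ball_subset_closure hρ hw
  choose a haM hax using hx
  have hy : Summable fun j => (1 / 2 : ℝ) ^ (j + 1) • (a j).2 := by
    refine (hasSum_half_pow_succ.summable.mul_right N).of_norm_bounded fun j => ?_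
    rw [norm_smul, Real.norm_of_nonneg (by positivity)]
    exact mul_le_mul_of_nonneg_left (hMN _ (haM j)) (by positivity)
  refine ⟨(w, ∑' j, (1 / 2 : ℝ) ^ (j + 1) • (a j).2), ?_, rfl⟩
  refine hM.mem_of_hasSum_smul hMc (fun j => by positivity) hasSum_half_pow_succ haM ?_
  simp only [← hax] at hxw
  exact hxw.prodMk hy.hasSum

theorem exists_bounded_section_on_ball {E Y : Type*} [NormedAddCommGroup E]
    [NormedSpace ℝ E] [CompleteSpace E] [NormedAddCommGroup Y] [NormedSpace ℝ Y] [CompleteSpace Y]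
    {M : Set (E × Y)} (hM : Convex ℝ M) (hMc : IsClosed M) (hdom : ∀ q, ∃ y, (q, y) ∈ M) :
    ∃ q₀ : E, ∃ ρ > 0, ∃ N : ℝ, ∀ q ∈ ball q₀ ρ, ∃ y, ‖y‖ ≤ N ∧ (q, y) ∈ M := by
  let A : ℕ → Set (E × Y) := fun n => M ∩ univ ×ˢ closedBall 0 n
  have hcover : ⋃ n : ℕ, closure (Prod.fst '' A n) = univ := by
    refine eq_univ_of_forall fun q => ?_
    obtain ⟨y, hy⟩ := hdom q
    refine mem_iUnion.2 ⟨⌈‖y‖⌉₊, subset_closure ⟨(q, y), ⟨hy, mem_univ _, ?_⟩, rfl⟩⟩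
    simpa using Nat.le_ceil ‖y‖
  obtain ⟨n, q₀, hq₀⟩ := nonempty_interior_of_iUnion_of_closed (fun _ => isClosed_closure) hcover
  obtain ⟨ρ, hρ, hball⟩ := isOpen_iff.1 isOpen_interior q₀ hq₀
  refine ⟨q₀, ρ / 2, half_pos hρ, n, fun q hq => ?_⟩
  obtain ⟨⟨q, y⟩, ⟨hqy, -, hy⟩, rfl⟩ := ball_half_subset_image_fst
    (hM.inter (convex_univ.prod (convex_closedBall 0 n)))
    (hMc.inter (isClosed_univ.prod isClosed_closedBall)) (fun m hm => by simpa using hm.2.2)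
    (hball.trans interior_subset) hq
  exact ⟨y, by simpa using hy, hqy⟩

def coneEpigraph {E Y : Type*} [Add Y] (K : Set Y) (f : E → Y) : Set (E × Y) :=
  {q | q.2 ∈ ({f q.1} : Set Y) + K}

theorem mem_coneEpigraph {E Y : Type*} [Add Y] {K : Set Y} {f : E → Y} {q : E} {y : Y} :
    (q, y) ∈ coneEpigraph K f ↔ ∃ k ∈ K, f q + k = y := by
  simp only [coneEpigraph, mem_ofPred_eq, singleton_add, mem_image]

theorem mk_apply_mem_coneEpigraph {E Y : Type*} [AddZeroClass Y] {K : Set Y} (f : E → Y)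
    (hK0 : (0 : Y) ∈ K) (q : E) : (q, f q) ∈ coneEpigraph K f :=
  mem_coneEpigraph.2 ⟨0, hK0, add_zero _⟩

section coneEpigraph

variable {E Y : Type*} [NormedAddCommGroup E] [NormedSpace ℝ E]
  [NormedAddCommGroup Y] [NormedSpace ℝ Y] {K : Set Y} {f : E → Y}

theorem convexOn_comp_of_convex_coneEpigraph (hK0 : (0 : Y) ∈ K) {ψ : Y →L[ℝ] ℝ}
    (hψ : ∀ k ∈ K, 0 ≤ ψ k) (hf : Convex ℝ (coneEpigraph K f)) :
    ConvexOn ℝ univ fun q => ψ (f q) := by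
  refine ⟨convex_univ, fun q₁ _ q₂ _ a b ha hb hab => ?_⟩
  have h :=
    hf (mk_apply_mem_coneEpigraph f hK0 q₁) (mk_apply_mem_coneEpigraph f hK0 q₂) ha hb hab
  rw [Prod.smul_mk, Prod.smul_mk, Prod.mk_add_mk] at h
  obtain ⟨k, hk, hfk⟩ := mem_coneEpigraph.1 h
  have := congrArg ψ hfk
  simp only [map_add, map_smul, smul_eq_mul] at this ⊢
  linarith [hψ k hk]

theorem continuous_comp_of_coneEpigraph [CompleteSpace E] [CompleteSpace Y] (hK0 : (0 : Y) ∈ K)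
    {ψ : Y →L[ℝ] ℝ} (hψ : ∀ k ∈ K, 0 ≤ ψ k) (hf : Convex ℝ (coneEpigraph K f))
    (hfc : IsClosed (coneEpigraph K f)) : Continuous fun q => ψ (f q) := by
  have hg := convexOn_comp_of_convex_coneEpigraph hK0 hψ hf
  obtain ⟨q₀, ρ, hρ, N, hN⟩ := exists_bounded_section_on_ball hf hfc
    fun q => ⟨f q, mk_apply_mem_coneEpigraph f hK0 q⟩
  have hbdd : ∀ q ∈ ball q₀ ρ, ψ (f q) ≤ ‖ψ‖ * N := by
    intro q hq
    obtain ⟨y, hyN, hy⟩ := hN q hq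
    obtain ⟨k, hk, rfl⟩ := mem_coneEpigraph.1 hy
    calc ψ (f q) ≤ ψ (f q + k) := by rw [map_add]; linarith [hψ k hk]
      _ ≤ ‖ψ‖ * ‖f q + k‖ := (le_abs_self _).trans (ψ.le_opNorm _)
      _ ≤ ‖ψ‖ * N := mul_le_mul_of_nonneg_left hyN (norm_nonneg ψ)
  have hlocal := (hg.continuousOn_tfae isOpen_univ univ_nonempty).out 3 1
  refine continuousOn_univ.1 (hlocal.1 ⟨q₀, mem_univ _, ?_⟩)
  exact isBoundedUnder_of_eventually_le (a := ‖ψ‖ * N)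
    (eventually_map.2 (eventually_of_mem (ball_mem_nhds q₀ hρ) hbdd))

end coneEpigraph

def normalCone {E : Type*} [NormedAddCommGroup E] [NormedSpace ℝ E] (D : Set E) (z : E) :
    Set (E →L[ℝ] ℝ) :=
  {η | ∀ d ∈ D, η (d - z) ≤ 0}

theorem ConvexOn.exists_mem_subdiff_sub_mem_normalCone {E : Type*} [NormedAddCommGroup E]
    [NormedSpace ℝ E] {g : E → ℝ} (hg : ConvexOn ℝ univ g) (hgc : Continuous g) {D : Set E}
    (hD : Convex ℝ D) {z : E} (hz : z ∈ D) {Φ : E →L[ℝ] ℝ}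
    (hΦ : ∀ d ∈ D, Φ (d - z) ≤ g d - g z) : ∃ ξ ∈ subdiff g z, Φ - ξ ∈ normalCone D z := by
  let A : Set (E × ℝ) := {p | p.1 ∈ univ ∧ g p.1 < p.2}
  let B : Set (E × ℝ) := {p | p.1 ∈ D ∧ p.2 = g z + Φ (p.1 - z)}
  have hAo : IsOpen A := by
    simpa [A] using isOpen_lt (hgc.comp continuous_fst) continuous_snd
  have hB : Convex ℝ B := by
    rintro ⟨d₁, t₁⟩ ⟨hd₁, ht₁⟩ ⟨d₂, t₂⟩ ⟨hd₂, ht₂⟩ a b ha hb hab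
    refine ⟨hD hd₁ hd₂ ha hb hab, ?_⟩
    simp only [Prod.smul_mk, Prod.mk_add_mk, smul_eq_mul, map_sub, map_add, map_smul] at ht₁ ht₂ ⊢
    linear_combination a * ht₁ + b * ht₂ + (g z - Φ z) * hab
  have hAB : Disjoint A B := by
    refine disjoint_left.2 fun ⟨d, t⟩ ⟨_, hlt⟩ ⟨hd, ht⟩ => ?_
    simp only at hlt ht
    linarith [hΦ d hd]
  obtain ⟨ℓ, u, hℓA, hℓB⟩ := geometric_hahn_banach_open hg.convex_strict_epigraph hAo hB hAB
  set l := ℓ.comp (.inl ℝ E ℝ)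
  set c := ℓ (0, 1)
  have hℓ : ∀ h t, ℓ (h, t) = l h + t * c := fun h t => by
    rw [show ((h, t) : E × ℝ) = (h, 0) + t • (0, 1) by simp, map_add, map_smul, smul_eq_mul]
    rfl
  have hzB : (z, g z) ∈ B := ⟨hz, by simp⟩
  have hBz := hℓB _ hzB
  rw [hℓ] at hBz
  have hc : c < 0 := by
    have := hℓA (z, g z + 1) ⟨mem_univ _, by simp⟩
    rw [hℓ] at this
    linarith
  have hAu : ∀ h, l h + g h * c ≤ u := fun h => le_of_forall_pos_lt_add fun ε hε => by
    have := hℓA (h, g h + ε / -c) ⟨mem_univ _, by simp only; linarith [div_pos hε (neg_pos.2 hc)]⟩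
    rw [hℓ, add_mul, div_mul_eq_mul_div, div_neg, mul_div_assoc, div_self hc.ne] at this
    linarith
  have hu : u = l z + g z * c := le_antisymm hBz (hAu z)
  refine ⟨(-c)⁻¹ • l, fun h => ?_, fun d hd => ?_⟩
  · rw [smul_apply, smul_eq_mul, inv_mul_le_iff₀ (neg_pos.2 hc), map_sub l]
    linarith [hAu h]
  · have := hℓB _ (show (d, g z + Φ (d - z)) ∈ B from ⟨hd, rfl⟩)
    rw [sub_apply, smul_apply, smul_eq_mul, sub_nonpos,
      le_inv_mul_iff₀ (neg_pos.2 hc), map_sub l]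
    rw [hℓ] at this
    nlinarith

theorem mem_coderiv_add_cone_iff {P X Y : Type*} [NormedAddCommGroup P] [NormedSpace ℝ P]
    [NormedAddCommGroup Y] [NormedSpace ℝ Y] {K : Set Y} (hK0 : (0 : Y) ∈ K) {ψ : Y →L[ℝ] ℝ}
    (hψ : ∀ k ∈ K, 0 ≤ ψ k) {f : P × X → Y} {C : P → Set X} {F : P → Set Y}
    (hF : ∀ p, F p = {y : Y | ∃ x ∈ C p, y = f (p, x)}) {pb : P} {xb : X} {φ : P →L[ℝ] ℝ} :
    φ ∈ coderiv (fun p => F p + K) pb (f (pb, xb)) ψ ↔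
      ∀ u, ∀ x ∈ C u, φ (u - pb) ≤ ψ (f (u, x)) - ψ (f (pb, xb)) := by
  refine ⟨fun h u x hx => ?_, fun h u v hv => ?_⟩
  · have hF' : f (u, x) ∈ F u := by rw [hF]; exact ⟨x, hx, rfl⟩
    have := h u _ ⟨f (u, x), hF', 0, hK0, add_zero _⟩
    rw [map_sub ψ] at this
    linarith
  · obtain ⟨y, hy, k, hk, rfl⟩ := hv
    rw [hF] at hy
    obtain ⟨x, hx, rfl⟩ := hy
    show φ (u - pb) - ψ (f (u, x) + k - f (pb, xb)) ≤ 0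
    rw [map_sub ψ, map_add]
    linarith [h u x hx, hψ k hk]

theorem forall_gph_le_iff_exists_subdiff_add_coderiv {P X : Type*} [NormedAddCommGroup P]
    [NormedSpace ℝ P] [NormedAddCommGroup X] [NormedSpace ℝ X] {g : P × X → ℝ}
    (hg : ConvexOn ℝ univ g) (hgc : Continuous g) {C : P → Set X} (hC : Convex ℝ (gph C))
    {pb : P} {xb : X} (hxb : xb ∈ C pb) {φ : P →L[ℝ] ℝ} :
    (∀ u, ∀ x ∈ C u, φ (u - pb) ≤ g (u, x) - g (pb, xb)) ↔
      ∃ pstar : P →L[ℝ] ℝ, ∃ xstar : X →L[ℝ] ℝ, pstar.coprod xstar ∈ subdiff g (pb, xb) ∧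
        ∃ qstar ∈ coderiv C pb xb xstar, φ = pstar + qstar := by
  refine ⟨fun h => ?_, ?_⟩
  · obtain ⟨ξ, hξ, hη⟩ := hg.exists_mem_subdiff_sub_mem_normalCone hgc hC (z := (pb, xb)) hxb
      (Φ := φ.comp (.fst ℝ P X)) fun d hd => h d.1 d.2 hd
    refine ⟨ξ.comp (.inl ℝ P X), ξ.comp (.inr ℝ P X), by rwa [ξ.coprod_comp_inl_inr],
      φ - ξ.comp (.inl ℝ P X), fun u v hv => ?_, by abel⟩
    have := hη (u, v) hv
    rw [sub_apply, ← ξ.comp_inl_add_comp_inr, Prod.mk_sub_mk] at this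
    have hsplit : φ (u - pb) - (ξ.comp (.inl ℝ P X) (u - pb) + ξ.comp (.inr ℝ P X) (v - xb)) ≤ 0 :=
      this
    rw [sub_apply]
    linarith
  · rintro ⟨pstar, xstar, hsub, qstar, hq, rfl⟩ u x hx
    have := hsub (u, x)
    rw [ContinuousLinearMap.coprod_apply, Prod.mk_sub_mk] at this
    rw [add_apply]
    linarith [hq u x hx]

theorem stmt10_general
    {P X Y : Type*}
    [NormedAddCommGroup P] [NormedSpace ℝ P] [CompleteSpace P]
    [NormedAddCommGroup X] [NormedSpace ℝ X] [CompleteSpace X]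
    [NormedAddCommGroup Y] [NormedSpace ℝ Y] [CompleteSpace Y]
    -- K is a pointed closed convex cone in Y
    (K : Set Y)
    (hKpointed : K ∩ (-K) = {0})
    -- f is K-convex and K-closed (its epigraph is convex and closed)
    (f : P × X → Y)
    (hfconv : Convex ℝ {q : (P × X) × Y | q.2 ∈ ({f q.1} : Set Y) + K})
    (hfcl : IsClosed {q : (P × X) × Y | q.2 ∈ ({f q.1} : Set Y) + K})
    -- C is a closed convex set-valued map
    (C : P → Set X) (hCconv : Convex ℝ (gph C))
    -- F(p) = {f(p,x) : x ∈ C(p)},  𝓕(p) = Min_K F(p)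
    (F : P → Set Y) (hF : ∀ p, F p = {y : Y | ∃ x ∈ C p, y = f (p, x)})
    -- (pb, xb) ∈ gph S, yb = f(pb, xb)
    (pb : P) (xb : X) (hxbC : xb ∈ C pb)
    (yb : Y) (hyb : yb = f (pb, xb))
    (ψ : Y →L[ℝ] ℝ) (hψ : ∀ k ∈ K, 0 ≤ ψ k) :
    coderiv (fun p => F p + K) pb yb ψ
      = {w : P →L[ℝ] ℝ | ∃ pstar : P →L[ℝ] ℝ, ∃ xstar : X →L[ℝ] ℝ,
          pstar.coprod xstar ∈ subdiff (fun q : P × X => ψ (f q)) (pb, xb) ∧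
          ∃ qstar ∈ coderiv C pb xb xstar, w = pstar + qstar} := by
  subst hyb
  have hK0 : (0 : Y) ∈ K := (hKpointed.symm ▸ rfl : (0 : Y) ∈ K ∩ -K).1
  ext φ
  rw [mem_coderiv_add_cone_iff hK0 hψ hF]
  exact forall_gph_le_iff_exists_subdiff_add_coderiv
    (convexOn_comp_of_convex_coneEpigraph hK0 hψ hfconv)
    (continuous_comp_of_coneEpigraph hK0 hψ hfconv hfcl) hCconv hxbC

/-- under the assumptions of STATEMENT 9, for every `y* ∈ K*`,
`D*(F + K)(pb, yb)(y*) = ⋃_{(p*, x*) ∈ ∂⟨y*, f⟩(pb, xb)} {p* + D*C(pb, xb)(x*)}`. -/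
theorem stmt10
    {P X Y : Type*}
    [NormedAddCommGroup P] [NormedSpace ℝ P] [CompleteSpace P]
    [NormedAddCommGroup X] [NormedSpace ℝ X] [CompleteSpace X]
    [NormedAddCommGroup Y] [NormedSpace ℝ Y] [CompleteSpace Y]
    -- K is a pointed closed convex cone in Y
    (K : Set Y) (hKconv : Convex ℝ K) (hKclosed : IsClosed K)
    (hKcone : ∀ t : ℝ, 0 ≤ t → ∀ y ∈ K, t • y ∈ K)
    (hKpointed : K ∩ (-K) = {0})
    -- f is K-convex and K-closed (its epigraph is convex and closed)
    (f : P × X → Y)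
    (hfconv : Convex ℝ {q : (P × X) × Y | q.2 ∈ ({f q.1} : Set Y) + K})
    (hfcl : IsClosed {q : (P × X) × Y | q.2 ∈ ({f q.1} : Set Y) + K})
    -- C is a closed convex set-valued map
    (C : P → Set X) (hCconv : Convex ℝ (gph C)) (hCcl : IsClosed (gph C))
    -- F(p) = {f(p,x) : x ∈ C(p)},  𝓕(p) = Min_K F(p)
    (F : P → Set Y) (hF : ∀ p, F p = {y : Y | ∃ x ∈ C p, y = f (p, x)})
    (Fmin : P → Set Y)
    (hFmin : ∀ p, Fmin p = {a ∈ F p | (F p - {a}) ∩ ((-K) \ {0}) = ∅})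
    -- (pb, xb) ∈ gph S, yb = f(pb, xb)
    (pb : P) (xb : X) (hxbC : xb ∈ C pb) (hsol : f (pb, xb) ∈ Fmin pb)
    (yb : Y) (hyb : yb = f (pb, xb))
    -- (i) ℝ⁺(rge H − dom f) is a closed linear subspace of P × X, where
    --     H(p) = {p} × C(p), so rge H = gph C and dom f = P × X
    (hqual1 : ∃ S : Submodule ℝ (P × X), IsClosed (S : Set (P × X)) ∧
      {w : P × X | ∃ t : ℝ, 0 ≤ t ∧
        ∃ u ∈ ⋃ p : P, ({p} : Set P) ×ˢ C p, ∃ v : P × X, w = t • (u - v)} = S)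
    -- (ii) ℝ⁺(P − dom C) is a closed linear subspace of P
    (hqual2 : ∃ S : Submodule ℝ P, IsClosed (S : Set P) ∧
      {w : P | ∃ t : ℝ, 0 ≤ t ∧ ∃ u : P, ∃ v ∈ dom C, w = t • (u - v)} = S)
    (ψ : Y →L[ℝ] ℝ) (hψ : ∀ k ∈ K, 0 ≤ ψ k) :
    coderiv (fun p => F p + K) pb yb ψ
      = {w : P →L[ℝ] ℝ | ∃ pstar : P →L[ℝ] ℝ, ∃ xstar : X →L[ℝ] ℝ,
          pstar.coprod xstar ∈ subdiff (fun q : P × X => ψ (f q)) (pb, xb) ∧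
          ∃ qstar ∈ coderiv C pb xb xstar, w = pstar + qstar} :=
  stmt10_general K hKpointed f hfconv hfcl C hCconv F hF pb xb hxbC yb hyb ψ hψ
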